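/- HyperQCTL* is strictly more expressive than MPL[E]: for every closed MPL[E] sentence there is a HyperQCTL* formula with the same AP-labeled tree models, and moreover there exists a HyperQCTL* formula ψ such that no closed MPL[E] sentence φ satisfies (for every AP-labeled tree T, T ⊨ φ iff T ⊨ ψ). -/

import Mathlib

set_option linter.unusedVariables false

/-- A trace over a set `AP` of atomic propositions: an infinite sequence of subsets of `AP`. -/
abbrev Trace (AP : Type) := ℕ → Set AP

/-! ### HyperQPTL -/

inductive HQPTL (AP : Type) : Type
  | atom  : AP → ℕ → HQPTL AP          -- a_π
  | prop  : ℕ → HQPTL AP               -- q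
  | not   : HQPTL AP → HQPTL AP
  | or    : HQPTL AP → HQPTL AP → HQPTL AP
  | next  : HQPTL AP → HQPTL AP
  | untl  : HQPTL AP → HQPTL AP → HQPTL AP
  | exTr  : ℕ → HQPTL AP → HQPTL AP    -- ∃π
  | allTr : ℕ → HQPTL AP → HQPTL AP    -- ∀π
  | exPr  : ℕ → HQPTL AP → HQPTL AP    -- ∃q
  | allPr : ℕ → HQPTL AP → HQPTL AP    -- ∀q

namespace HQPTL

variable {AP : Type}

/-- Satisfaction `Π,i ⊨_T φ` for HyperQPTL.  `V` assigns traces (in `T`) to trace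
variables, `P` assigns to each propositional variable a trace over `{q}`
(modelled as `ℕ → Prop`). -/
def sat (T : Set (Trace AP)) : (ℕ → Trace AP) → (ℕ → ℕ → Prop) → ℕ → HQPTL AP → Prop
  | V, P, i, atom a π => a ∈ V π i
  | V, P, i, prop q => P q i
  | V, P, i, not φ => ¬ sat T V P i φ
  | V, P, i, or φ ψ => sat T V P i φ ∨ sat T V P i ψ
  | V, P, i, next φ => sat T V P (i + 1) φ
  | V, P, i, untl φ ψ =>
      ∃ j, i ≤ j ∧ sat T V P j ψ ∧ ∀ k, i ≤ k → k < j → sat T V P k φ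
  | V, P, i, exTr π φ => ∃ t ∈ T, sat T (Function.update V π t) P i φ
  | V, P, i, allTr π φ => ∀ t ∈ T, sat T (Function.update V π t) P i φ
  | V, P, i, exPr q φ => ∃ p : ℕ → Prop, sat T V (Function.update P q p) i φ
  | V, P, i, allPr q φ => ∀ p : ℕ → Prop, sat T V (Function.update P q p) i φ

/-- `T ⊨ φ`: satisfaction at time 0 with the empty (default) assignment. -/
def models (T : Set (Trace AP)) (φ : HQPTL AP) : Prop :=
  sat T (fun _ _ => (∅ : Set AP)) (fun _ _ => False) 0 φ

/-- quantifier-free HyperQPTL formulas -/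
def qfree : HQPTL AP → Prop
  | atom _ _ => True
  | prop _ => True
  | not φ => qfree φ
  | or φ ψ => qfree φ ∧ qfree ψ
  | next φ => qfree φ
  | untl φ ψ => qfree φ ∧ qfree ψ
  | _ => False

/-- prenex form: a prefix of (trace or propositional) quantifiers followed by a
quantifier-free body; this is exactly the shape of formulas produced by the
HyperQPTL grammar. -/
def prenex : HQPTL AP → Prop
  | exTr _ φ => prenex φ
  | allTr _ φ => prenex φ
  | exPr _ φ => prenex φ
  | allPr _ φ => prenex φ
  | φ => qfree φ

/-- the ∀* fragment: only universal trace quantifiers in the prefix,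
propositional quantifiers may occur arbitrarily in the prefix. -/
def allFrag : HQPTL AP → Prop
  | allTr _ φ => allFrag φ
  | exPr _ φ => allFrag φ
  | allPr _ φ => allFrag φ
  | φ => qfree φ

/-- trailing block `Q⃗₂ ψ` of propositional quantifiers over a quantifier-free body -/
def eaFrag4 : HQPTL AP → Prop
  | exPr _ φ => eaFrag4 φ
  | allPr _ φ => eaFrag4 φ
  | φ => qfree φ

/-- `∀π′₁…∀π′ₘ Q⃗₂ ψ` -/
def eaFrag3 : HQPTL AP → Prop
  | allTr _ φ => eaFrag3 φ
  | φ => eaFrag4 φ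

/-- `Q⃗₁ ∀π′₁…∀π′ₘ Q⃗₂ ψ` -/
def eaFrag2 : HQPTL AP → Prop
  | exPr _ φ => eaFrag2 φ
  | allPr _ φ => eaFrag2 φ
  | φ => eaFrag3 φ

/-- `∃π₁…∃πₙ Q⃗₁ ∀π′₁…∀π′ₘ Q⃗₂ ψ` -/
def eaFrag1 : HQPTL AP → Prop
  | exTr _ φ => eaFrag1 φ
  | φ => eaFrag2 φ

/-- the ∃*∀* fragment: `Q⃗₀ ∃π₁…∃πₙ Q⃗₁ ∀π′₁…∀π′ₘ Q⃗₂ ψ` with `ψ` quantifier-free -/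
def eaFrag : HQPTL AP → Prop
  | exPr _ φ => eaFrag φ
  | allPr _ φ => eaFrag φ
  | φ => eaFrag1 φ

/-- a HyperQPTL formula is satisfiable if some nonempty trace set satisfies it -/
def satisfiable (φ : HQPTL AP) : Prop :=
  ∃ T : Set (Trace AP), T.Nonempty ∧ models T φ

/-- a natural injective encoding of HyperQPTL formulas over `Fin k` as naturals -/
def enc {k : ℕ} : HQPTL (Fin k) → ℕ
  | atom a π => Nat.pair 0 (Nat.pair a.val π)
  | prop q => Nat.pair 1 q
  | not φ => Nat.pair 2 (enc φ)
  | or φ ψ => Nat.pair 3 (Nat.pair (enc φ) (enc ψ))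
  | next φ => Nat.pair 4 (enc φ)
  | untl φ ψ => Nat.pair 5 (Nat.pair (enc φ) (enc ψ))
  | exTr π φ => Nat.pair 6 (Nat.pair π (enc φ))
  | allTr π φ => Nat.pair 7 (Nat.pair π (enc φ))
  | exPr q φ => Nat.pair 8 (Nat.pair q (enc φ))
  | allPr q φ => Nat.pair 9 (Nat.pair q (enc φ))

end HQPTL

/-! ### QPTL -/

inductive QPTL (AP : Type) : Type
  | atom  : AP → QPTL AP
  | prop  : ℕ → QPTL AP
  | not   : QPTL AP → QPTL AP
  | or    : QPTL AP → QPTL AP → QPTL AP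
  | next  : QPTL AP → QPTL AP
  | untl  : QPTL AP → QPTL AP → QPTL AP
  | exPr  : ℕ → QPTL AP → QPTL AP
  | allPr : ℕ → QPTL AP → QPTL AP

namespace QPTL

variable {AP : Type}

/-- QPTL satisfaction over a single trace `t`. -/
def sat (t : Trace AP) : (ℕ → ℕ → Prop) → ℕ → QPTL AP → Prop
  | P, i, atom a => a ∈ t i
  | P, i, prop q => P q i
  | P, i, not φ => ¬ sat t P i φ
  | P, i, or φ ψ => sat t P i φ ∨ sat t P i ψ
  | P, i, next φ => sat t P (i + 1) φ
  | P, i, untl φ ψ => ∃ j, i ≤ j ∧ sat t P j ψ ∧ ∀ k, i ≤ k → k < j → sat t P k φ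
  | P, i, exPr q φ => ∃ p : ℕ → Prop, sat t (Function.update P q p) i φ
  | P, i, allPr q φ => ∀ p : ℕ → Prop, sat t (Function.update P q p) i φ

def models (t : Trace AP) (φ : QPTL AP) : Prop :=
  sat t (fun _ _ => False) 0 φ

def satisfiable (φ : QPTL AP) : Prop := ∃ t : Trace AP, models t φ

end QPTL

/-- The QPTL formula obtained from a HyperQPTL formula by removing all trace
quantifiers and replacing every atom `a_π` by the atom `a`. -/
def HQPTL.strip {AP : Type} : HQPTL AP → QPTL AP
  | .atom a _ => .atom a
  | .prop q => .prop q
  | .not φ => .not φ.strip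
  | .or φ ψ => .or φ.strip ψ.strip
  | .next φ => .next φ.strip
  | .untl φ ψ => .untl φ.strip ψ.strip
  | .exTr _ φ => φ.strip
  | .allTr _ φ => φ.strip
  | .exPr q φ => .exPr q φ.strip
  | .allPr q φ => .allPr q φ.strip

/-! ### FO[<,E] -/

inductive FOE (AP : Type) : Type
  | patom : AP → ℕ → FOE AP            -- P_a(x)
  | lt    : ℕ → ℕ → FOE AP             -- x < y
  | eq    : ℕ → ℕ → FOE AP             -- x = y
  | el    : ℕ → ℕ → FOE AP             -- E(x,y)
  | not   : FOE AP → FOE AP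
  | or    : FOE AP → FOE AP → FOE AP
  | ex    : ℕ → FOE AP → FOE AP        -- ∃x

namespace FOE

variable {AP : Type}

/-- First-order satisfaction over a trace set `T`; first-order variables range
over `T × ℕ`, modelled by valuations `v : ℕ → Trace AP × ℕ` (quantifiers
restrict the first component to `T`). -/
def sat (T : Set (Trace AP)) : (ℕ → Trace AP × ℕ) → FOE AP → Prop
  | v, patom a x => a ∈ (v x).1 (v x).2
  | v, lt x y => (v x).1 = (v y).1 ∧ (v x).2 < (v y).2
  | v, eq x y => v x = v y
  | v, el x y => (v x).2 = (v y).2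
  | v, not φ => ¬ sat T v φ
  | v, or φ ψ => sat T v φ ∨ sat T v ψ
  | v, ex x φ => ∃ p : Trace AP × ℕ, p.1 ∈ T ∧ sat T (Function.update v x p) φ

def free : FOE AP → Finset ℕ
  | patom _ x => {x}
  | lt x y => {x, y}
  | eq x y => {x, y}
  | el x y => {x, y}
  | not φ => free φ
  | or φ ψ => free φ ∪ free ψ
  | ex x φ => (free φ).erase x

def closed (φ : FOE AP) : Prop := φ.free = ∅

def models (T : Set (Trace AP)) (φ : FOE AP) : Prop :=
  sat T (fun _ => (fun _ => (∅ : Set AP), 0)) φ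

end FOE

/-! ### S1S[E] -/

inductive S1STerm : Type
  | var  : ℕ → S1STerm
  | min  : ℕ → S1STerm
  | succ : S1STerm → S1STerm

namespace S1STerm

/-- value of an S1S[E] term under a first-order valuation -/
def val {AP : Type} (v : ℕ → Trace AP × ℕ) : S1STerm → Trace AP × ℕ
  | var x => v x
  | min x => ((v x).1, 0)
  | succ τ => ((val v τ).1, (val v τ).2 + 1)

def fv : S1STerm → Finset ℕ
  | var x => {x}
  | min x => {x}
  | succ τ => fv τ

def enc : S1STerm → ℕ
  | var x => Nat.pair 0 x
  | min x => Nat.pair 1 x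
  | succ τ => Nat.pair 2 τ.enc

end S1STerm

/-- S1S[E] formulas: second-order variables are either quantifiable variables
(indexed by `ℕ`, via `Sum.inl`) or the designated free variables `X_a`
for `a ∈ AP` (via `Sum.inr`). -/
inductive S1SE (AP : Type) : Type
  | mem  : S1STerm → ℕ ⊕ AP → S1SE AP   -- τ ∈ X
  | eq   : S1STerm → S1STerm → S1SE AP   -- τ = τ'
  | el   : S1STerm → S1STerm → S1SE AP   -- E(τ,τ')
  | not  : S1SE AP → S1SE AP
  | or   : S1SE AP → S1SE AP → S1SE AP
  | exFO : ℕ → S1SE AP → S1SE AP         -- ∃x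
  | exSO : ℕ → S1SE AP → S1SE AP         -- ∃X

namespace S1SE

variable {AP : Type}

/-- S1S[E] satisfaction over a trace set `T`: first-order variables range over
`T × ℕ`, second-order variables over subsets of `T × ℕ`; each designated
variable `X_a` is interpreted as `{(t,n) ∈ T × ℕ | a ∈ t[n]}`. -/
def sat (T : Set (Trace AP)) :
    (ℕ → Trace AP × ℕ) → (ℕ → Set (Trace AP × ℕ)) → S1SE AP → Prop
  | v1, v2, mem τ (Sum.inl X) => τ.val v1 ∈ v2 X
  | v1, v2, mem τ (Sum.inr a) =>
      (τ.val v1).1 ∈ T ∧ a ∈ (τ.val v1).1 (τ.val v1).2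
  | v1, v2, eq τ σ => τ.val v1 = σ.val v1
  | v1, v2, el τ σ => (τ.val v1).2 = (σ.val v1).2
  | v1, v2, not φ => ¬ sat T v1 v2 φ
  | v1, v2, or φ ψ => sat T v1 v2 φ ∨ sat T v1 v2 ψ
  | v1, v2, exFO x φ =>
      ∃ p : Trace AP × ℕ, p.1 ∈ T ∧ sat T (Function.update v1 x p) v2 φ
  | v1, v2, exSO X φ =>
      ∃ A : Set (Trace AP × ℕ), (∀ p ∈ A, p.1 ∈ T) ∧
        sat T v1 (Function.update v2 X A) φ

def freeFO : S1SE AP → Finset ℕ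
  | mem τ _ => τ.fv
  | eq τ σ => τ.fv ∪ σ.fv
  | el τ σ => τ.fv ∪ σ.fv
  | not φ => freeFO φ
  | or φ ψ => freeFO φ ∪ freeFO ψ
  | exFO x φ => (freeFO φ).erase x
  | exSO _ φ => freeFO φ

def freeSO : S1SE AP → Finset ℕ
  | mem _ (Sum.inl X) => {X}
  | mem _ (Sum.inr _) => ∅
  | eq _ _ => ∅
  | el _ _ => ∅
  | not φ => freeSO φ
  | or φ ψ => freeSO φ ∪ freeSO ψ
  | exFO _ φ => freeSO φ
  | exSO X φ => (freeSO φ).erase X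

/-- a closed S1S[E] formula: free variables only among the `X_a` -/
def closed (φ : S1SE AP) : Prop := φ.freeFO = ∅ ∧ φ.freeSO = ∅

def models (T : Set (Trace AP)) (φ : S1SE AP) : Prop :=
  sat T (fun _ => (fun _ => (∅ : Set AP), 0)) (fun _ => (∅ : Set (Trace AP × ℕ))) φ

/-- a natural injective encoding of S1S[E] formulas over `Fin k` as naturals -/
def enc {k : ℕ} : S1SE (Fin k) → ℕ
  | mem τ (Sum.inl X) => Nat.pair 0 (Nat.pair τ.enc X)
  | mem τ (Sum.inr a) => Nat.pair 1 (Nat.pair τ.enc a.val)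
  | eq τ σ => Nat.pair 2 (Nat.pair τ.enc σ.enc)
  | el τ σ => Nat.pair 3 (Nat.pair τ.enc σ.enc)
  | not φ => Nat.pair 4 φ.enc
  | or φ ψ => Nat.pair 5 (Nat.pair φ.enc ψ.enc)
  | exFO x φ => Nat.pair 6 (Nat.pair x φ.enc)
  | exSO X φ => Nat.pair 7 (Nat.pair X φ.enc)

end S1SE

/-! ### Labeled trees -/

/-- An `AP`-labeled tree: an infinite partially ordered set of nodes (given by
the strict ancestor relation `lt`) with a least element `root`, in which the
ancestors of every node are totally ordered and finitely many (so that levels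
are defined), and every node has a direct successor. -/
structure LTree (AP : Type) : Type 1 where
  node : Type
  lt : node → node → Prop
  lt_irrefl : ∀ s, ¬ lt s s
  lt_trans : ∀ a b c, lt a b → lt b c → lt a c
  root : node
  root_min : ∀ s, s = root ∨ lt root s
  anc_total : ∀ s a b, lt a s → lt b s → a = b ∨ lt a b ∨ lt b a
  anc_finite : ∀ s, {a | lt a s}.Finite
  succ_exists : ∀ s, ∃ s', lt s s' ∧ ¬ ∃ c, lt s c ∧ lt c s'
  label : node → Set AP

namespace LTree

variable {AP : Type} (T : LTree AP)

/-- `a` is the direct ancestor of `b` -/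
def DirAnc (a b : T.node) : Prop := T.lt a b ∧ ¬ ∃ c, T.lt a c ∧ T.lt c b

/-- a path: an infinite sequence of nodes, each the direct ancestor of the next -/
def IsPath (p : ℕ → T.node) : Prop := ∀ i, T.DirAnc (p i) (p (i + 1))

/-- an initial path: a path starting at the root -/
def InitPath (p : ℕ → T.node) : Prop := T.IsPath p ∧ p 0 = T.root

/-- the level of a node: its number of ancestors -/
noncomputable def level (s : T.node) : ℕ := (T.anc_finite s).toFinset.card

/-- the collection of node sets that constitute exactly one initial infinite
path of the tree -/
def pathSets : Set (Set T.node) :=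
  { A | ∃ p : ℕ → T.node, T.InitPath p ∧ A = Set.range p }

end LTree

/-- Bisimilarity of `AP`-labeled trees. -/
def Bisimilar {AP : Type} (T₁ T₂ : LTree AP) : Prop :=
  ∃ R : T₁.node → T₂.node → Prop,
    R T₁.root T₂.root ∧
    ∀ s u, R s u →
      T₁.label s = T₂.label u ∧
      (∀ s', T₁.DirAnc s s' → ∃ u', T₂.DirAnc u u' ∧ R s' u') ∧
      (∀ u', T₂.DirAnc u u' → ∃ s', T₁.DirAnc s s' ∧ R s' u')

/-! ### HyperCTL* -/

inductive HCTL (AP : Type) : Type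
  | atom : AP → ℕ → HCTL AP           -- a_π
  | not  : HCTL AP → HCTL AP
  | or   : HCTL AP → HCTL AP → HCTL AP
  | next : HCTL AP → HCTL AP
  | untl : HCTL AP → HCTL AP → HCTL AP
  | ex   : ℕ → HCTL AP → HCTL AP      -- ∃π

namespace HCTL

variable {AP : Type}

/-- HyperCTL* satisfaction `Π,i ⊨_T φ`: `V` assigns initial paths to path
variables, `ε` is the most recently assigned path. -/
def sat (T : LTree AP) : (ℕ → ℕ → T.node) → (ℕ → T.node) → ℕ → HCTL AP → Prop
  | V, ε, i, atom a π => a ∈ T.label (V π i)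
  | V, ε, i, not φ => ¬ sat T V ε i φ
  | V, ε, i, or φ ψ => sat T V ε i φ ∨ sat T V ε i ψ
  | V, ε, i, next φ => sat T V ε (i + 1) φ
  | V, ε, i, untl φ ψ =>
      ∃ j, i ≤ j ∧ sat T V ε j ψ ∧ ∀ k, i ≤ k → k < j → sat T V ε k φ
  | V, ε, i, ex π φ =>
      ∃ p : ℕ → T.node, T.InitPath p ∧ (∀ j ≤ i, p j = ε j) ∧
        sat T (Function.update V π p) p i φ

/-- `T ⊨ φ` -/
def models (T : LTree AP) (φ : HCTL AP) : Prop :=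
  ∀ p : ℕ → T.node, T.InitPath p → sat T (fun _ => p) p 0 φ

def satisfiable (φ : HCTL AP) : Prop := ∃ T : LTree AP, models T φ

def qfree : HCTL AP → Prop
  | atom _ _ => True
  | not φ => qfree φ
  | or φ ψ => qfree φ ∧ qfree ψ
  | next φ => qfree φ
  | untl φ ψ => qfree φ ∧ qfree ψ
  | ex _ _ => False

/-- a natural injective encoding of HyperCTL* formulas over `Fin k` -/
def enc {k : ℕ} : HCTL (Fin k) → ℕ
  | atom a π => Nat.pair 0 (Nat.pair a.val π)
  | not φ => Nat.pair 1 φ.enc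
  | or φ ψ => Nat.pair 2 (Nat.pair φ.enc ψ.enc)
  | next φ => Nat.pair 3 φ.enc
  | untl φ ψ => Nat.pair 4 (Nat.pair φ.enc ψ.enc)
  | ex π φ => Nat.pair 5 (Nat.pair π φ.enc)

end HCTL

/-! ### HyperCTL* in negation normal form -/

inductive NHCTL (AP : Type) : Type
  | pos  : AP → ℕ → NHCTL AP           -- a_π
  | neg  : AP → ℕ → NHCTL AP           -- ¬a_π
  | and  : NHCTL AP → NHCTL AP → NHCTL AP
  | or   : NHCTL AP → NHCTL AP → NHCTL AP
  | next : NHCTL AP → NHCTL AP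
  | untl : NHCTL AP → NHCTL AP → NHCTL AP
  | rel  : NHCTL AP → NHCTL AP → NHCTL AP   -- release
  | ex   : ℕ → NHCTL AP → NHCTL AP
  | all  : ℕ → NHCTL AP → NHCTL AP

namespace NHCTL

variable {AP : Type}

def sat (T : LTree AP) : (ℕ → ℕ → T.node) → (ℕ → T.node) → ℕ → NHCTL AP → Prop
  | V, ε, i, pos a π => a ∈ T.label (V π i)
  | V, ε, i, neg a π => a ∉ T.label (V π i)
  | V, ε, i, and φ ψ => sat T V ε i φ ∧ sat T V ε i ψ
  | V, ε, i, or φ ψ => sat T V ε i φ ∨ sat T V ε i ψ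
  | V, ε, i, next φ => sat T V ε (i + 1) φ
  | V, ε, i, untl φ ψ =>
      ∃ j, i ≤ j ∧ sat T V ε j ψ ∧ ∀ k, i ≤ k → k < j → sat T V ε k φ
  | V, ε, i, rel φ ψ =>
      (∀ j, i ≤ j → sat T V ε j ψ) ∨
      ∃ j, i ≤ j ∧ sat T V ε j φ ∧ ∀ k, i ≤ k → k ≤ j → sat T V ε k ψ
  | V, ε, i, ex π φ =>
      ∃ p : ℕ → T.node, T.InitPath p ∧ (∀ j ≤ i, p j = ε j) ∧
        sat T (Function.update V π p) p i φ
  | V, ε, i, all π φ =>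
      ∀ p : ℕ → T.node, T.InitPath p → (∀ j ≤ i, p j = ε j) →
        sat T (Function.update V π p) p i φ

def models (T : LTree AP) (φ : NHCTL AP) : Prop :=
  ∀ p : ℕ → T.node, T.InitPath p → sat T (fun _ => p) p 0 φ

def satisfiable (φ : NHCTL AP) : Prop := ∃ T : LTree AP, models T φ

/-- contains no existential path quantifier -/
def noEx : NHCTL AP → Prop
  | pos _ _ => True
  | neg _ _ => True
  | and φ ψ => noEx φ ∧ noEx ψ
  | or φ ψ => noEx φ ∧ noEx ψ
  | next φ => noEx φ
  | untl φ ψ => noEx φ ∧ noEx ψ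
  | rel φ ψ => noEx φ ∧ noEx ψ
  | ex _ _ => False
  | all _ φ => noEx φ

/-- contains no universal path quantifier -/
def noAll : NHCTL AP → Prop
  | pos _ _ => True
  | neg _ _ => True
  | and φ ψ => noAll φ ∧ noAll ψ
  | or φ ψ => noAll φ ∧ noAll ψ
  | next φ => noAll φ
  | untl φ ψ => noAll φ ∧ noAll ψ
  | rel φ ψ => noAll φ ∧ noAll ψ
  | ex _ φ => noAll φ
  | all _ _ => False

/-- quantifier-free -/
def qf : NHCTL AP → Prop
  | pos _ _ => True
  | neg _ _ => True
  | and φ ψ => qf φ ∧ qf ψ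
  | or φ ψ => qf φ ∧ qf ψ
  | next φ => qf φ
  | untl φ ψ => qf φ ∧ qf ψ
  | rel φ ψ => qf φ ∧ qf ψ
  | ex _ _ => False
  | all _ _ => False

/-- the ∃*∀* fragment: no existential path quantifier occurs in the scope of a
universal path quantifier -/
def eaFrag : NHCTL AP → Prop
  | pos _ _ => True
  | neg _ _ => True
  | and φ ψ => eaFrag φ ∧ eaFrag ψ
  | or φ ψ => eaFrag φ ∧ eaFrag ψ
  | next φ => eaFrag φ
  | untl φ ψ => eaFrag φ ∧ eaFrag ψ
  | rel φ ψ => eaFrag φ ∧ eaFrag ψ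
  | ex _ φ => eaFrag φ
  | all _ φ => noEx φ

/-- a natural injective encoding of NNF HyperCTL* formulas over `Fin k` -/
def enc {k : ℕ} : NHCTL (Fin k) → ℕ
  | pos a π => Nat.pair 0 (Nat.pair a.val π)
  | neg a π => Nat.pair 1 (Nat.pair a.val π)
  | and φ ψ => Nat.pair 2 (Nat.pair φ.enc ψ.enc)
  | or φ ψ => Nat.pair 3 (Nat.pair φ.enc ψ.enc)
  | next φ => Nat.pair 4 φ.enc
  | untl φ ψ => Nat.pair 5 (Nat.pair φ.enc ψ.enc)
  | rel φ ψ => Nat.pair 6 (Nat.pair φ.enc ψ.enc)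
  | ex π φ => Nat.pair 7 (Nat.pair π φ.enc)
  | all π φ => Nat.pair 8 (Nat.pair π φ.enc)

end NHCTL

/-! ### MSO[E] and MPL[E] over labeled trees -/

inductive MSOE (AP : Type) : Type
  | patom : AP → ℕ → MSOE AP           -- P_a(x)
  | lt    : ℕ → ℕ → MSOE AP            -- x < y  (proper ancestor)
  | eq    : ℕ → ℕ → MSOE AP            -- x = y
  | el    : ℕ → ℕ → MSOE AP            -- E(x,y)
  | mem   : ℕ → ℕ → MSOE AP            -- x ∈ X
  | not   : MSOE AP → MSOE AP
  | or    : MSOE AP → MSOE AP → MSOE AP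
  | exFO  : ℕ → MSOE AP → MSOE AP      -- ∃x
  | exSO  : ℕ → MSOE AP → MSOE AP      -- ∃X

namespace MSOE

variable {AP : Type}

/-- satisfaction over a labeled tree, where second-order quantifiers range over
the collection `SO` of admissible node sets -/
def sat (T : LTree AP) (SO : Set (Set T.node)) :
    (ℕ → T.node) → (ℕ → Set T.node) → MSOE AP → Prop
  | v1, v2, patom a x => a ∈ T.label (v1 x)
  | v1, v2, lt x y => T.lt (v1 x) (v1 y)
  | v1, v2, eq x y => v1 x = v1 y
  | v1, v2, el x y => T.level (v1 x) = T.level (v1 y)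
  | v1, v2, mem x X => v1 x ∈ v2 X
  | v1, v2, not φ => ¬ sat T SO v1 v2 φ
  | v1, v2, or φ ψ => sat T SO v1 v2 φ ∨ sat T SO v1 v2 ψ
  | v1, v2, exFO x φ => ∃ s : T.node, sat T SO (Function.update v1 x s) v2 φ
  | v1, v2, exSO X φ => ∃ A ∈ SO, sat T SO v1 (Function.update v2 X A) φ

def freeFO : MSOE AP → Finset ℕ
  | patom _ x => {x}
  | lt x y => {x, y}
  | eq x y => {x, y}
  | el x y => {x, y}
  | mem x _ => {x}
  | not φ => freeFO φ
  | or φ ψ => freeFO φ ∪ freeFO ψ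
  | exFO x φ => (freeFO φ).erase x
  | exSO _ φ => freeFO φ

def freeSO : MSOE AP → Finset ℕ
  | patom _ _ => ∅
  | lt _ _ => ∅
  | eq _ _ => ∅
  | el _ _ => ∅
  | mem _ X => {X}
  | not φ => freeSO φ
  | or φ ψ => freeSO φ ∪ freeSO ψ
  | exFO _ φ => freeSO φ
  | exSO X φ => (freeSO φ).erase X

def closed (φ : MSOE AP) : Prop := φ.freeFO = ∅ ∧ φ.freeSO = ∅

/-- `T ⊨ φ` with MPL[E] semantics: second-order quantification restricted to
sets of nodes constituting exactly one initial infinite path -/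
def modelsMPL (T : LTree AP) (φ : MSOE AP) : Prop :=
  sat T T.pathSets (fun _ => T.root) (fun _ => (∅ : Set T.node)) φ

/-- `T ⊨ φ` with full MSO[E] semantics: second-order quantification over
arbitrary sets of nodes -/
def modelsMSO (T : LTree AP) (φ : MSOE AP) : Prop :=
  sat T Set.univ (fun _ => T.root) (fun _ => (∅ : Set T.node)) φ

end MSOE

/-! ### HyperQCTL* -/

inductive HQCTL (AP : Type) : Type
  | atom  : AP → ℕ → HQCTL AP          -- a_π
  | qatom : ℕ → ℕ → HQCTL AP           -- q_π
  | not   : HQCTL AP → HQCTL AP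
  | or    : HQCTL AP → HQCTL AP → HQCTL AP
  | next  : HQCTL AP → HQCTL AP
  | untl  : HQCTL AP → HQCTL AP → HQCTL AP
  | ex    : ℕ → HQCTL AP → HQCTL AP    -- ∃π
  | exPr  : ℕ → HQCTL AP → HQCTL AP    -- ∃q

namespace HQCTL

variable {AP : Type}

/-- HyperQCTL* satisfaction: `Q` records, for every quantified proposition, the
set of tree nodes currently labeled by it (a relabeling of the tree). -/
def sat (T : LTree AP) : (ℕ → Set T.node) → (ℕ → ℕ → T.node) → (ℕ → T.node) →
    ℕ → HQCTL AP → Prop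
  | Q, V, ε, i, atom a π => a ∈ T.label (V π i)
  | Q, V, ε, i, qatom q π => V π i ∈ Q q
  | Q, V, ε, i, not φ => ¬ sat T Q V ε i φ
  | Q, V, ε, i, or φ ψ => sat T Q V ε i φ ∨ sat T Q V ε i ψ
  | Q, V, ε, i, next φ => sat T Q V ε (i + 1) φ
  | Q, V, ε, i, untl φ ψ =>
      ∃ j, i ≤ j ∧ sat T Q V ε j ψ ∧ ∀ k, i ≤ k → k < j → sat T Q V ε k φ
  | Q, V, ε, i, ex π φ =>
      ∃ p : ℕ → T.node, T.InitPath p ∧ (∀ j ≤ i, p j = ε j) ∧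
        sat T Q (Function.update V π p) p i φ
  | Q, V, ε, i, exPr q φ =>
      ∃ A : Set T.node, sat T (Function.update Q q A) V ε i φ

def models (T : LTree AP) (φ : HQCTL AP) : Prop :=
  ∀ p : ℕ → T.node, T.InitPath p →
    sat T (fun _ => (∅ : Set T.node)) (fun _ => p) p 0 φ

end HQCTL

/-!
A first-order variable of MPL[E] is simulated by a quantified proposition constrained to hold at
exactly one node, and a path-set variable by a path variable; the atoms `x < y`, `E(x, y)` and
`x ∈ X` then become statements about initial paths through the nodes involved.

For strictness, the formula `∃q. (every initial path meets q below the root) ∧ (q holds at most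
once per level)` holds on the comb tree with branch set `I` exactly when `I` injects into the
levels, i.e. is countable. An Ehrenfeucht–Fraïssé argument, with finite partial bijections
between the branch sets that can always be extended because both are infinite, shows that no MPL[E] sentence distinguishes the combs over `ℕ` and `ℝ`.
-/

namespace LTree

variable {AP : Type} {T : LTree AP}

theorem IsPath.lt_of_lt {p : ℕ → T.node} (hp : T.IsPath p) {i j : ℕ} (hij : i < j) :
    T.lt (p i) (p j) := by
  induction j, hij using Nat.le_induction with
  | base => exact (hp i).1
  | succ j _ ih => exact T.lt_trans _ _ _ ih (hp j).1

theorem not_lt_root (s : T.node) : ¬ T.lt s T.root := by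
  intro h
  rcases T.root_min s with rfl | h'
  · exact T.lt_irrefl _ h
  · exact T.lt_irrefl _ (T.lt_trans _ _ _ h h')

theorem level_eq_ncard (s : T.node) : T.level s = {a | T.lt a s}.ncard :=
  (Set.ncard_eq_toFinset_card _ (T.anc_finite s)).symm

theorem level_root : T.level T.root = 0 := by
  simp [level_eq_ncard, not_lt_root]

theorem level_lt_level {s t : T.node} (h : T.lt s t) : T.level s < T.level t := by
  rw [level_eq_ncard, level_eq_ncard]
  refine Set.ncard_lt_ncard ⟨fun a ha => T.lt_trans _ _ _ ha h, fun hsub => ?_⟩ (T.anc_finite t)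
  exact T.lt_irrefl s (hsub h)

theorem level_of_dirAnc {s t : T.node} (h : T.DirAnc s t) : T.level t = T.level s + 1 := by
  have hanc : {a | T.lt a t} = insert s {a | T.lt a s} := by
    ext a
    refine ⟨fun ha => ?_, ?_⟩
    · rcases T.anc_total t a s ha h.1 with rfl | has | hsa
      · exact Or.inl rfl
      · exact Or.inr has
      · exact absurd ⟨a, hsa, ha⟩ h.2
    · rintro (rfl | ha)
      · exact h.1
      · exact T.lt_trans _ _ _ ha h.1
  rw [level_eq_ncard, level_eq_ncard, hanc,
    Set.ncard_insert_of_notMem (show s ∉ {a | T.lt a s} from T.lt_irrefl s) (T.anc_finite s)]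

theorem InitPath.level_apply {p : ℕ → T.node} (hp : T.InitPath p) (i : ℕ) :
    T.level (p i) = i := by
  induction i with
  | zero => rw [hp.2, level_root]
  | succ i ih => rw [level_of_dirAnc (hp.1 i), ih]

theorem exists_isPath_apply_zero (s : T.node) : ∃ p, T.IsPath p ∧ p 0 = s := by
  choose f hf using T.succ_exists
  exact ⟨fun n => f^[n] s, fun n => by
    show T.DirAnc (f^[n] s) (f^[n + 1] s)
    rw [Function.iterate_succ_apply']
    exact hf _, rfl⟩

theorem InitPath.exists_extend {p : ℕ → T.node} (hp : T.InitPath p) {k : ℕ} {s : T.node}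
    (hs : T.DirAnc (p k) s) : ∃ p', T.InitPath p' ∧ p' (k + 1) = s := by
  obtain ⟨q, hq, hq0⟩ := exists_isPath_apply_zero s
  refine ⟨fun n => if n ≤ k then p n else q (n - (k + 1)), ⟨fun n => ?_, by simpa using hp.2⟩,
    by simp [hq0]⟩
  rcases lt_trichotomy n k with h | rfl | h
  · simpa [h.le, Nat.succ_le_of_lt h] using hp.1 n
  · simpa [hq0] using hs
  · have hn : n + 1 - (k + 1) = n - (k + 1) + 1 := by omega
    simpa [h.not_ge, (h.trans (Nat.lt_succ_self n)).not_ge, hn] using hq (n - (k + 1))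

theorem exists_dirAnc_of_ne_root {s : T.node} (hs : s ≠ T.root) : ∃ u, T.DirAnc u s := by
  have hne : (T.anc_finite s).toFinset.Nonempty :=
    ⟨T.root, by simpa using (T.root_min s).resolve_left hs⟩
  obtain ⟨u, hu, hmax⟩ := Finset.exists_max_image _ T.level hne
  rw [Set.Finite.mem_toFinset] at hu
  refine ⟨u, hu, fun ⟨c, huc, hcs⟩ => ?_⟩
  exact (level_lt_level huc).not_ge (hmax c (by simpa using hcs))

theorem exists_initPath_apply_level (s : T.node) : ∃ p, T.InitPath p ∧ p (T.level s) = s := by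
  induction h : T.level s generalizing s with
  | zero =>
    have hs : s = T.root := (T.root_min s).resolve_right fun hr => by
      simpa [h, level_root] using level_lt_level hr
    obtain ⟨p, hp, hp0⟩ := exists_isPath_apply_zero s
    exact ⟨p, ⟨hp, hp0.trans hs⟩, hp0⟩
  | succ k ih =>
    obtain ⟨u, hu⟩ := exists_dirAnc_of_ne_root (s := s) (by rintro rfl; simp [level_root] at h)
    obtain ⟨p, hp, hpu⟩ := ih u (by have := level_of_dirAnc hu; omega)
    exact hp.exists_extend (hpu ▸ hu)

theorem exists_initPath (T : LTree AP) : ∃ p, T.InitPath p :=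
  (exists_initPath_apply_level T.root).imp fun _ => And.left

theorem exists_initPath_apply_iff {P : T.node → Prop} :
    (∃ p, T.InitPath p ∧ ∃ j, P (p j)) ↔ ∃ s, P s := by
  refine ⟨fun ⟨p, _, j, h⟩ => ⟨p j, h⟩, fun ⟨s, h⟩ => ?_⟩
  obtain ⟨p, hp, hps⟩ := exists_initPath_apply_level s
  exact ⟨p, hp, T.level s, by rwa [hps]⟩

theorem exists_initPath_pair_apply_iff {P : T.node → T.node → Prop} :
    (∃ p p', T.InitPath p ∧ T.InitPath p' ∧ ∃ j, P (p j) (p' j)) ↔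
      ∃ s t, T.level s = T.level t ∧ P s t := by
  constructor
  · rintro ⟨p, p', hp, hp', j, h⟩
    exact ⟨p j, p' j, by rw [hp.level_apply, hp'.level_apply], h⟩
  · rintro ⟨s, t, hst, h⟩
    obtain ⟨p, hp, hps⟩ := exists_initPath_apply_level s
    obtain ⟨p', hp', hpt⟩ := exists_initPath_apply_level t
    exact ⟨p, p', hp, hp', T.level s, by rwa [hps, hst, hpt]⟩

theorem exists_initPath_pair_apply_lt_iff {P P' : T.node → Prop} :
    (∃ p p', T.InitPath p ∧ T.InitPath p' ∧ ∃ j, P (p j) ∧ ∃ j', j < j' ∧ P' (p' j')) ↔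
      ∃ s t, T.level s < T.level t ∧ P s ∧ P' t := by
  constructor
  · rintro ⟨p, p', hp, hp', j, hj, j', hjj', hj'⟩
    exact ⟨p j, p' j', by rwa [hp.level_apply, hp'.level_apply], hj, hj'⟩
  · rintro ⟨s, t, hst, hs, ht⟩
    obtain ⟨p, hp, hps⟩ := exists_initPath_apply_level s
    obtain ⟨p', hp', hpt⟩ := exists_initPath_apply_level t
    exact ⟨p, p', hp, hp', T.level s, by rwa [hps], T.level t, hst, by rwa [hpt]⟩

theorem eq_of_lt_of_level_eq {a b t : T.node} (ha : T.lt a t) (hb : T.lt b t)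
    (h : T.level a = T.level b) : a = b := by
  rcases T.anc_total t a b ha hb with hab | hab | hab
  · exact hab
  · exact absurd h (level_lt_level hab).ne
  · exact absurd h (level_lt_level hab).ne'

theorem lt_iff_exists_initPath {s t : T.node} :
    T.lt s t ↔ ∃ p, T.InitPath p ∧ ∃ j, p j = s ∧ ∃ j', j < j' ∧ p j' = t := by
  refine ⟨fun h => ?_, fun ⟨p, hp, j, hs, j', hjj', ht⟩ => hs ▸ ht ▸ hp.1.lt_of_lt hjj'⟩
  obtain ⟨p, hp, hpt⟩ := exists_initPath_apply_level t
  have hlev := level_lt_level h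
  have hps : T.lt (p (T.level s)) t := hpt ▸ hp.1.lt_of_lt hlev
  exact ⟨p, hp, T.level s, eq_of_lt_of_level_eq hps h (hp.level_apply _), T.level t, hlev, hpt⟩

end LTree

theorem Set.subsingleton_iff_not_lt_and_injOn {α β : Type*} [LinearOrder β] {A : Set α}
    {f : α → β} : A.Subsingleton ↔ (∀ s ∈ A, ∀ t ∈ A, ¬ f s < f t) ∧ A.InjOn f := by
  refine ⟨fun h => ⟨fun s hs t ht hlt => hlt.ne (congrArg f (h hs ht)), h.injOn f⟩, ?_⟩
  rintro ⟨hlt, hinj⟩ s hs t ht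
  rcases lt_trichotomy (f s) (f t) with h | h | h
  · exact absurd h (hlt s hs t ht)
  · exact hinj hs ht h
  · exact absurd h (hlt t ht s hs)

namespace HQCTL

variable {AP : Type}

def conj (φ ψ : HQCTL AP) : HQCTL AP := .not (.or (.not φ) (.not ψ))

def top : HQCTL AP := .or (.qatom 0 0) (.not (.qatom 0 0))

def eventually (φ : HQCTL AP) : HQCTL AP := .untl top φ

def sameNode (π π' : ℕ) : HQCTL AP :=
  .not (.exPr 0 (.not (.or (conj (.qatom 0 π) (.qatom 0 π'))
    (conj (.not (.qatom 0 π)) (.not (.qatom 0 π'))))))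

variable {T : LTree AP} {Q : ℕ → Set T.node} {V : ℕ → ℕ → T.node} {ε : ℕ → T.node} {i : ℕ}

@[simp]
theorem sat_atom {a : AP} {π : ℕ} : sat T Q V ε i (.atom a π) ↔ a ∈ T.label (V π i) :=
  Iff.rfl

@[simp]
theorem sat_qatom {q π : ℕ} : sat T Q V ε i (.qatom q π) ↔ V π i ∈ Q q := Iff.rfl

@[simp]
theorem sat_not {φ : HQCTL AP} : sat T Q V ε i (.not φ) ↔ ¬ sat T Q V ε i φ := Iff.rfl

@[simp]
theorem sat_next {φ : HQCTL AP} : sat T Q V ε i (.next φ) ↔ sat T Q V ε (i + 1) φ :=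
  Iff.rfl

theorem sat_exPr {q : ℕ} {φ : HQCTL AP} :
    sat T Q V ε i (.exPr q φ) ↔ ∃ A, sat T (Function.update Q q A) V ε i φ := Iff.rfl

@[simp]
theorem sat_conj {φ ψ : HQCTL AP} :
    sat T Q V ε i (conj φ ψ) ↔ sat T Q V ε i φ ∧ sat T Q V ε i ψ := by
  simp only [conj, sat]
  tauto

@[simp]
theorem sat_top : sat T Q V ε i top := by
  simp only [top, sat]
  tauto

@[simp]
theorem sat_eventually {φ : HQCTL AP} :
    sat T Q V ε i (eventually φ) ↔ ∃ j, i ≤ j ∧ sat T Q V ε j φ := by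
  simp only [eventually, sat, sat_top, implies_true, and_true]

@[simp]
theorem sat_sameNode {π π' : ℕ} : sat T Q V ε i (sameNode π π') ↔ V π i = V π' i := by
  simp only [sameNode, sat, sat_conj, Function.update_self, not_exists]
  refine ⟨fun h => by_contra fun hne => h {V π i} (by simp [Ne.symm hne]), fun h A => ?_⟩
  simp [h]

theorem sat_ex_zero (hε : ε 0 = T.root) {π : ℕ} {φ : HQCTL AP} :
    sat T Q V ε 0 (.ex π φ) ↔ ∃ p, T.InitPath p ∧ sat T Q (Function.update V π p) p 0 φ := by
  simp only [sat, Nat.le_zero, forall_eq, hε]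
  exact exists_congr fun p => ⟨fun ⟨hp, _, h⟩ => ⟨hp, h⟩, fun ⟨hp, h⟩ => ⟨hp, hp.2, h⟩⟩

theorem sat_ex_eventually_zero (hε : ε 0 = T.root) {π : ℕ} {φ : HQCTL AP} :
    sat T Q V ε 0 (.ex π (eventually φ)) ↔
      ∃ p, T.InitPath p ∧ ∃ j, sat T Q (Function.update V π p) p j φ := by
  simp [sat_ex_zero hε]

theorem sat_ex_ex_eventually_zero (hε : ε 0 = T.root) {φ : HQCTL AP} :
    sat T Q V ε 0 (.ex 0 (.ex 1 (eventually φ))) ↔ ∃ p p', T.InitPath p ∧ T.InitPath p' ∧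
      ∃ j, sat T Q (Function.update (Function.update V 0 p) 1 p') p' j φ := by
  rw [sat_ex_zero hε]
  constructor
  · rintro ⟨p, hp, h⟩
    obtain ⟨p', hp', h⟩ := (sat_ex_eventually_zero hp.2).1 h
    exact ⟨p, p', hp, hp', h⟩
  · rintro ⟨p, p', hp, hp', h⟩
    exact ⟨p, hp, (sat_ex_eventually_zero hp.2).2 ⟨p', hp', h⟩⟩

def someNode (q : ℕ) : HQCTL AP := .ex 0 (eventually (.qatom q 0))

def noLevelIncrease (q : ℕ) : HQCTL AP :=
  .not (.ex 0 (.ex 1 (eventually (conj (.qatom q 0) (.next (eventually (.qatom q 1)))))))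

def levelInjective (q : ℕ) : HQCTL AP :=
  .not (.ex 0 (.ex 1 (eventually (conj (.qatom q 0) (conj (.qatom q 1) (.not (sameNode 0 1)))))))

def singleton (q : ℕ) : HQCTL AP := conj (someNode q) (conj (noLevelIncrease q) (levelInjective q))

theorem sat_someNode (hε : ε 0 = T.root) {q : ℕ} :
    sat T Q V ε 0 (someNode q) ↔ (Q q).Nonempty := by
  simp only [someNode, sat_ex_eventually_zero hε, sat, Function.update_self]
  exact LTree.exists_initPath_apply_iff

theorem sat_noLevelIncrease (hε : ε 0 = T.root) {q : ℕ} :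
    sat T Q V ε 0 (noLevelIncrease q) ↔ ∀ s ∈ Q q, ∀ t ∈ Q q, ¬ T.level s < T.level t := by
  simp only [noLevelIncrease, sat_not, sat_ex_ex_eventually_zero hε, sat_conj, sat_qatom,
    sat_next, sat_eventually, Function.update_self, Function.update_of_ne one_ne_zero.symm]
  refine (LTree.exists_initPath_pair_apply_lt_iff (P := (· ∈ Q q)) (P' := (· ∈ Q q))).not.trans ?_
  simp only [not_exists, not_and]
  exact ⟨fun h s hs t ht hlt => h s t hlt hs ht, fun h s t hlt hs ht => h s hs t ht hlt⟩

theorem sat_levelInjective (hε : ε 0 = T.root) {q : ℕ} :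
    sat T Q V ε 0 (levelInjective q) ↔ (Q q).InjOn T.level := by
  simp only [levelInjective, sat_not, sat_ex_ex_eventually_zero hε, sat_conj, sat_qatom,
    sat_sameNode, Function.update_self, Function.update_of_ne one_ne_zero.symm]
  refine (LTree.exists_initPath_pair_apply_iff
    (P := fun s t => s ∈ Q q ∧ t ∈ Q q ∧ ¬ s = t)).not.trans ?_
  simp only [Set.InjOn, not_exists, not_and, not_not]
  exact ⟨fun h s hs t ht hst => h s t hst hs ht, fun h s t hst hs ht => h hs ht hst⟩

theorem sat_singleton (hε : ε 0 = T.root) {q : ℕ} :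
    sat T Q V ε 0 (singleton q) ↔ ∃ s, Q q = {s} := by
  rw [Set.exists_eq_singleton_iff_nonempty_subsingleton,
    Set.subsingleton_iff_not_lt_and_injOn (f := T.level), singleton, sat_conj, sat_conj,
    sat_someNode hε, sat_noLevelIncrease hε, sat_levelInjective hε]

end HQCTL

theorem Function.update_singleton_succ {N : Type*} {Q : ℕ → Set N} {v : ℕ → N} {F : Finset ℕ}
    {x : ℕ} (h : ∀ y ∈ F.erase x, Q (y + 1) = {v y}) (s : N) :
    ∀ y ∈ F, Function.update Q (x + 1) {s} (y + 1) = {Function.update v x s y} := by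
  intro y hy
  by_cases hyx : y = x
  · subst hyx
    simp
  · simp [hyx, h y (Finset.mem_erase.2 ⟨hyx, hy⟩)]

theorem Function.update_range_add_two {N : Type*} {A : ℕ → Set N} {V : ℕ → ℕ → N}
    {F : Finset ℕ} {X : ℕ} (h : ∀ Y ∈ F.erase X, A Y = Set.range (V (Y + 2))) (p : ℕ → N) :
    ∀ Y ∈ F, Function.update A X (Set.range p) Y =
      Set.range (Function.update V (X + 2) p (Y + 2)) := by
  intro Y hY
  by_cases hYX : Y = X
  · subst hYX
    simp
  · simp [hYX, h Y (Finset.mem_erase.2 ⟨hYX, hY⟩)]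

namespace HQCTL

variable {AP : Type}

/-- First-order variable `x` becomes the proposition `x + 1`, constrained to label a single
node; second-order variable `X` becomes the path variable `X + 2`. Proposition `0` and path
variables `0`, `1` are reserved for the gadgets. -/
def ofMPL : MSOE AP → HQCTL AP
  | .patom a x => .ex 0 (eventually (conj (.qatom (x + 1) 0) (.atom a 0)))
  | .lt x y => .ex 0 (eventually (conj (.qatom (x + 1) 0) (.next (eventually (.qatom (y + 1) 0)))))
  | .eq x y => .ex 0 (eventually (conj (.qatom (x + 1) 0) (.qatom (y + 1) 0)))
  | .el x y => .ex 0 (.ex 1 (eventually (conj (.qatom (x + 1) 0) (.qatom (y + 1) 1))))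
  | .mem x X => eventually (.qatom (x + 1) (X + 2))
  | .not φ => .not (ofMPL φ)
  | .or φ ψ => .or (ofMPL φ) (ofMPL ψ)
  | .exFO x φ => .exPr (x + 1) (conj (singleton (x + 1)) (ofMPL φ))
  | .exSO X φ => .ex (X + 2) (ofMPL φ)

variable {T : LTree AP}

theorem sat_ofMPL_iff (φ : MSOE AP) {v1 : ℕ → T.node} {v2 : ℕ → Set T.node}
    {Q : ℕ → Set T.node} {V : ℕ → ℕ → T.node} {ε : ℕ → T.node} (hε : ε 0 = T.root)
    (hFO : ∀ x ∈ φ.freeFO, Q (x + 1) = {v1 x})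
    (hSO : ∀ X ∈ φ.freeSO, v2 X = Set.range (V (X + 2))) :
    MSOE.sat T T.pathSets v1 v2 φ ↔ sat T Q V ε 0 (ofMPL φ) := by
  induction φ generalizing v1 v2 Q V ε with
  | patom a x =>
    simp only [MSOE.sat, ofMPL, sat_ex_eventually_zero hε, sat_conj, sat_qatom, sat_atom,
      Function.update_self, hFO x (by simp [MSOE.freeFO]), Set.mem_singleton_iff]
    refine Iff.trans ?_
      (LTree.exists_initPath_apply_iff (P := fun s => s = v1 x ∧ a ∈ T.label s)).symm
    simp
  | lt x y =>
    simp only [MSOE.sat, ofMPL, sat_ex_eventually_zero hε, sat_conj, sat_qatom, sat_next,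
      sat_eventually, Function.update_self, hFO x (by simp [MSOE.freeFO]),
      hFO y (by simp [MSOE.freeFO]), Set.mem_singleton_iff]
    exact LTree.lt_iff_exists_initPath
  | eq x y =>
    simp only [MSOE.sat, ofMPL, sat_ex_eventually_zero hε, sat_conj, sat_qatom,
      Function.update_self, hFO x (by simp [MSOE.freeFO]), hFO y (by simp [MSOE.freeFO]),
      Set.mem_singleton_iff]
    refine Iff.trans ?_ (LTree.exists_initPath_apply_iff (P := fun s => s = v1 x ∧ s = v1 y)).symm
    simp
  | el x y =>
    simp only [MSOE.sat, ofMPL, sat_ex_ex_eventually_zero hε, sat_conj, sat_qatom,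
      Function.update_self, Function.update_of_ne one_ne_zero.symm,
      hFO x (by simp [MSOE.freeFO]), hFO y (by simp [MSOE.freeFO]), Set.mem_singleton_iff]
    refine Iff.trans ?_
      (LTree.exists_initPath_pair_apply_iff (P := fun s t => s = v1 x ∧ t = v1 y)).symm
    simp
  | mem x X =>
    simp only [MSOE.sat, ofMPL, sat_eventually, sat_qatom, hFO x (by simp [MSOE.freeFO]),
      hSO X (by simp [MSOE.freeSO]), Set.mem_singleton_iff, Set.mem_range, zero_le, true_and]
  | not φ ih => exact (ih hε hFO hSO).not
  | or φ ψ ihφ ihψ =>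
    simp only [MSOE.freeFO, MSOE.freeSO, Finset.mem_union] at hFO hSO
    exact or_congr (ihφ hε (fun x hx => hFO x (.inl hx)) (fun X hX => hSO X (.inl hX)))
      (ihψ hε (fun x hx => hFO x (.inr hx)) (fun X hX => hSO X (.inr hX)))
  | exFO x φ ih =>
    simp only [MSOE.sat, ofMPL, sat_exPr, sat_conj, sat_singleton hε, Function.update_self]
    constructor
    · rintro ⟨s, hs⟩
      exact ⟨{s}, ⟨s, rfl⟩, (ih hε (Function.update_singleton_succ hFO s) hSO).1 hs⟩
    · rintro ⟨_, ⟨s, rfl⟩, hs⟩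
      exact ⟨s, (ih hε (Function.update_singleton_succ hFO s) hSO).2 hs⟩
  | exSO X φ ih =>
    simp only [MSOE.sat, ofMPL, sat_ex_zero hε, LTree.pathSets, Set.mem_ofPred_eq]
    constructor
    · rintro ⟨_, ⟨p, hp, rfl⟩, hs⟩
      exact ⟨p, hp, (ih hp.2 hFO (Function.update_range_add_two hSO p)).1 hs⟩
    · rintro ⟨p, hp, hs⟩
      exact ⟨_, ⟨p, hp, rfl⟩, (ih hp.2 hFO (Function.update_range_add_two hSO p)).2 hs⟩

theorem models_iff_of_forall_initPath {ψ : HQCTL AP} {P : Prop}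
    (h : ∀ p, T.InitPath p → (sat T (fun _ => ∅) (fun _ => p) p 0 ψ ↔ P)) :
    models T ψ ↔ P := by
  obtain ⟨p₀, hp₀⟩ := T.exists_initPath
  exact ⟨fun hψ => (h p₀ hp₀).1 (hψ p₀ hp₀), fun hP p hp => (h p hp).2 hP⟩

theorem models_ofMPL_iff {φ : MSOE AP} (hφ : φ.closed) (T : LTree AP) :
    MSOE.modelsMPL T φ ↔ models T (ofMPL φ) :=
  (models_iff_of_forall_initPath fun _ hp => (sat_ofMPL_iff φ hp.2
    (by simp [hφ.1]) (by simp [hφ.2])).symm).symm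

end HQCTL

def combLT {I : Type} : Option (I × ℕ) → Option (I × ℕ) → Prop
  | none, some _ => True
  | some (i, n), some (j, m) => i = j ∧ n < m
  | _, none => False

/-- The root `none` with one unlabeled infinite branch `some (i, 0), some (i, 1), …` for each
`i : I`. -/
def combTree (AP I : Type) [Nonempty I] : LTree AP where
  node := Option (I × ℕ)
  lt := combLT
  lt_irrefl := by rintro (_ | ⟨i, n⟩) <;> simp [combLT]
  lt_trans := by
    rintro (_ | ⟨a, n⟩) (_ | ⟨b, m⟩) (_ | ⟨c, k⟩) <;> simp only [combLT] <;> grind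
  root := none
  root_min := by rintro (_ | ⟨i, n⟩) <;> simp [combLT]
  anc_total := by
    rintro (_ | ⟨i, n⟩) (_ | ⟨a, k⟩) (_ | ⟨b, m⟩) <;> simp only [combLT] <;> grind
  anc_finite := by
    rintro (_ | ⟨i, n⟩)
    · convert Set.finite_empty
      ext (_ | ⟨a, k⟩) <;> simp [combLT]
    · refine ((Set.finite_Iio n).image fun m => some (i, m)).insert none |>.subset ?_
      rintro (_ | ⟨a, k⟩) h
      · exact Set.mem_insert _ _
      · obtain ⟨rfl, hk⟩ := h
        exact Set.mem_insert_of_mem _ ⟨k, hk, rfl⟩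
  succ_exists := by
    rintro (_ | ⟨i, n⟩)
    · refine ⟨some (Classical.arbitrary I, 0), trivial, ?_⟩
      rintro ⟨_ | ⟨a, k⟩, h1, h2⟩ <;> simp [combLT] at h1 h2
    · refine ⟨some (i, n + 1), ⟨rfl, n.lt_succ_self⟩, ?_⟩
      rintro ⟨_ | ⟨a, k⟩, h1, h2⟩ <;> simp [combLT] at h1 h2
      omega
  label := fun _ => ∅

namespace CombTree

variable {AP I J : Type}

def branch (i : I) : ℕ → Option (I × ℕ)
  | 0 => none
  | k + 1 => some (i, k)

theorem branch_injective_of_ne_zero {k : ℕ} (hk : k ≠ 0) :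
    Function.Injective fun i : I => branch i k := by
  obtain ⟨k, rfl⟩ := Nat.exists_eq_succ_of_ne_zero hk
  intro i i' h
  simpa [branch] using h

theorem some_mem_range_branch_iff {i j : I} {n : ℕ} :
    some (j, n) ∈ Set.range (branch i) ↔ j = i := by
  refine ⟨fun ⟨k, hk⟩ => ?_, fun h => ⟨n + 1, by rw [h]; rfl⟩⟩
  cases k <;> simp_all [branch]

variable [Nonempty I] [Nonempty J]

theorem branch_initPath (i : I) : (combTree AP I).InitPath (branch i) := by
  refine ⟨fun k => ⟨?_, ?_⟩, rfl⟩
  · cases k <;> simp [combTree, branch, combLT]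
  · rintro ⟨_ | ⟨a, m⟩, h1, h2⟩ <;> cases k <;> simp [combTree, branch, combLT] at h1 h2
    omega

theorem level_none : (combTree AP I).level none = 0 := LTree.level_root

theorem level_some (i : I) (n : ℕ) : (combTree AP I).level (some (i, n)) = n + 1 :=
  (branch_initPath i).level_apply (n + 1)

theorem eq_branch_of_initPath {p : ℕ → (combTree AP I).node} (hp : (combTree AP I).InitPath p) :
    ∃ i, p = branch i := by
  have hsome : ∀ k, ∃ i, p (k + 1) = some (i, k) := by
    intro k
    have hlev := hp.level_apply (k + 1)
    rcases h : p (k + 1) with _ | ⟨i, m⟩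
    · rw [h, level_none] at hlev
      omega
    · rw [h, level_some] at hlev
      exact ⟨i, by rw [Nat.succ_inj.1 hlev]⟩
  obtain ⟨i, hi⟩ := hsome 0
  refine ⟨i, funext fun k => ?_⟩
  obtain _ | k := k
  · exact hp.2
  obtain ⟨i', hi'⟩ := hsome k
  rcases Nat.eq_zero_or_pos k with rfl | hk
  · exact hi
  have hlt := hp.1.lt_of_lt (show 1 < k + 1 by omega)
  rw [hi, hi'] at hlt
  rw [hi', ← hlt.1]
  rfl

theorem mem_pathSets_iff {A : Set (combTree AP I).node} :
    A ∈ (combTree AP I).pathSets ↔ ∃ i, A = Set.range (branch i) := by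
  constructor
  · rintro ⟨p, hp, rfl⟩
    obtain ⟨i, rfl⟩ := eq_branch_of_initPath hp
    exact ⟨i, rfl⟩
  · rintro ⟨i, rfl⟩
    exact ⟨branch i, branch_initPath i, rfl⟩

end CombTree

theorem Function.forall_update_rel {α β γ : Type*} [DecidableEq α] {r : β → γ → Prop}
    {f : α → β} {g : α → γ} (h : ∀ y, r (f y) (g y)) {b : β} {c : γ} (hbc : r b c) (x : α) :
    ∀ y, r (Function.update f x b y) (Function.update g x c y) := by
  intro y
  by_cases hy : y = x
  · subst hy
    simpa using hbc
  · simpa [hy] using h y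

namespace CombTree

variable {AP I J : Type}

structure IsFinPartialBij (R : I → J → Prop) : Prop where
  finite : {x : I × J | R x.1 x.2}.Finite
  left_unique : Relator.LeftUnique R
  right_unique : Relator.RightUnique R

theorem IsFinPartialBij.bot : IsFinPartialBij fun (_ : I) (_ : J) => False :=
  ⟨by simp, fun _ _ _ h => h.elim, fun _ _ _ h => h.elim⟩

theorem IsFinPartialBij.flip {R : I → J → Prop} (h : IsFinPartialBij R) :
    IsFinPartialBij (flip R) :=
  ⟨(h.finite.image Prod.swap).subset fun x hx => ⟨x.swap, hx, rfl⟩,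
    fun _ _ _ hac hbc => h.right_unique hac hbc, fun _ _ _ hab hac => h.left_unique hab hac⟩

theorem IsFinPartialBij.exists_extend_right [Infinite J] {R : I → J → Prop}
    (h : IsFinPartialBij R) (i : I) :
    ∃ R' j, IsFinPartialBij R' ∧ R ≤ R' ∧ R' i j := by
  by_cases hi : ∃ j, R i j
  · obtain ⟨j, hj⟩ := hi
    exact ⟨R, j, h, le_rfl, hj⟩
  simp only [not_exists] at hi
  obtain ⟨j, hj⟩ := (h.finite.image Prod.snd).infinite_compl.nonempty
  have hj : ∀ a, ¬ R a j := fun a ha => hj ⟨(a, j), ha, rfl⟩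
  refine ⟨fun a b => R a b ∨ a = i ∧ b = j, j, ⟨?_, ?_, ?_⟩, fun a b => Or.inl, Or.inr ⟨rfl, rfl⟩⟩
  · refine (h.finite.insert (i, j)).subset ?_
    rintro ⟨a, b⟩ (hab | ⟨rfl, rfl⟩)
    · exact Or.inr hab
    · exact Or.inl rfl
  · rintro a b c (hac | ⟨rfl, rfl⟩) (hbc | ⟨hb, hc⟩)
    exacts [h.left_unique hac hbc, (hj a (hc ▸ hac)).elim, (hj b hbc).elim, hb.symm]
  · rintro a b c (hab | ⟨rfl, rfl⟩) (hac | ⟨ha, hc⟩)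
    exacts [h.right_unique hab hac, (hi b (ha ▸ hab)).elim, (hi c hac).elim, hc.symm]

theorem IsFinPartialBij.exists_extend_left [Infinite I] {R : I → J → Prop}
    (h : IsFinPartialBij R) (j : J) :
    ∃ R' i, IsFinPartialBij R' ∧ R ≤ R' ∧ R' i j :=
  let ⟨R', i, hR', hle, hji⟩ := h.flip.exists_extend_right j
  ⟨Function.swap R', i, hR'.flip, fun a b hab => hle b a hab, hji⟩

def NodeRel (R : I → J → Prop) : Option (I × ℕ) → Option (J × ℕ) → Prop
  | none, none => True
  | some (i, n), some (j, m) => R i j ∧ n = m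
  | _, _ => False

theorem NodeRel.mono {R R' : I → J → Prop} (hle : R ≤ R') :
    ∀ {a b}, NodeRel R a b → NodeRel R' a b
  | none, none, _ => trivial
  | some _, some _, ⟨hij, hnm⟩ => ⟨hle _ _ hij, hnm⟩

theorem IsFinPartialBij.exists_nodeRel_right [Infinite J] {R : I → J → Prop}
    (h : IsFinPartialBij R) : ∀ a, ∃ R' b, IsFinPartialBij R' ∧ R ≤ R' ∧ NodeRel R' a b
  | none => ⟨R, none, h, le_rfl, trivial⟩
  | some (i, n) =>
    let ⟨R', j, hR', hle, hij⟩ := h.exists_extend_right i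
    ⟨R', some (j, n), hR', hle, hij, rfl⟩

theorem IsFinPartialBij.exists_nodeRel_left [Infinite I] {R : I → J → Prop}
    (h : IsFinPartialBij R) : ∀ b, ∃ R' a, IsFinPartialBij R' ∧ R ≤ R' ∧ NodeRel R' a b
  | none => ⟨R, none, h, le_rfl, trivial⟩
  | some (j, n) =>
    let ⟨R', i, hR', hle, hij⟩ := h.exists_extend_left j
    ⟨R', some (i, n), hR', hle, hij, rfl⟩

theorem IsFinPartialBij.combLT_iff {R : I → J → Prop} (h : IsFinPartialBij R) :
    ∀ {a a' b b'}, NodeRel R a b → NodeRel R a' b' → (combLT a a' ↔ combLT b b')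
  | none, none, none, none, _, _ => Iff.rfl
  | none, some _, none, some _, _, _ => Iff.rfl
  | some _, none, some _, none, _, _ => Iff.rfl
  | some (_, _), some (_, _), some (_, _), some (_, _), ⟨hij, rfl⟩, ⟨hij', rfl⟩ =>
    and_congr_left' ⟨fun e => h.right_unique hij (e ▸ hij'), fun e => h.left_unique hij (e ▸ hij')⟩

theorem IsFinPartialBij.eq_iff {R : I → J → Prop} (h : IsFinPartialBij R) :
    ∀ {a a' b b'}, NodeRel R a b → NodeRel R a' b' → (a = a' ↔ b = b')
  | none, none, none, none, _, _ => by simp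
  | none, some _, none, some _, _, _ => by simp
  | some _, none, some _, none, _, _ => by simp
  | some (_, _), some (_, _), some (_, _), some (_, _), ⟨hij, rfl⟩, ⟨hij', rfl⟩ => by
    simp only [Option.some.injEq, Prod.mk.injEq, and_congr_left_iff]
    exact fun _ => ⟨fun e => h.right_unique hij (e ▸ hij'), fun e => h.left_unique hij (e ▸ hij')⟩

def PathSetRel (R : I → J → Prop) (A : Set (Option (I × ℕ))) (B : Set (Option (J × ℕ))) :
    Prop :=
  (A = ∅ ∧ B = ∅) ∨ ∃ i j, R i j ∧ A = Set.range (branch i) ∧ B = Set.range (branch j)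

theorem PathSetRel.mono {R R' : I → J → Prop} (hle : R ≤ R') {A B} (h : PathSetRel R A B) :
    PathSetRel R' A B :=
  h.imp_right fun ⟨i, j, hij, hA, hB⟩ => ⟨i, j, hle i j hij, hA, hB⟩

theorem IsFinPartialBij.mem_iff {R : I → J → Prop} (h : IsFinPartialBij R) {A B a b}
    (hAB : PathSetRel R A B) (hab : NodeRel R a b) : a ∈ A ↔ b ∈ B := by
  obtain ⟨rfl, rfl⟩ | ⟨i, j, hij, rfl, rfl⟩ := hAB
  · simp
  match a, b, hab with
  | none, none, _ => exact iff_of_true ⟨0, rfl⟩ ⟨0, rfl⟩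
  | some (_, _), some (_, _), ⟨hij', rfl⟩ =>
    rw [some_mem_range_branch_iff, some_mem_range_branch_iff]
    exact ⟨fun e => h.right_unique (e ▸ hij') hij, fun e => h.left_unique hij' (e ▸ hij)⟩

theorem NodeRel.level_eq [Nonempty I] [Nonempty J] {R : I → J → Prop} :
    ∀ {a b}, NodeRel R a b → (combTree AP I).level a = (combTree AP J).level b
  | none, none, _ => by rw [level_none, level_none]
  | some (_, _), some (_, _), ⟨_, rfl⟩ => by rw [level_some, level_some]

theorem sat_combTree_iff [Infinite I] [Infinite J] (φ : MSOE AP) {R : I → J → Prop}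
    (hR : IsFinPartialBij R) {v1 : ℕ → (combTree AP I).node} {v2 : ℕ → Set (combTree AP I).node}
    {w1 : ℕ → (combTree AP J).node} {w2 : ℕ → Set (combTree AP J).node}
    (h1 : ∀ x, NodeRel R (v1 x) (w1 x)) (h2 : ∀ X, PathSetRel R (v2 X) (w2 X)) :
    MSOE.sat (combTree AP I) (combTree AP I).pathSets v1 v2 φ ↔
      MSOE.sat (combTree AP J) (combTree AP J).pathSets w1 w2 φ := by
  induction φ generalizing R v1 v2 w1 w2 with
  | patom a x => exact Iff.rfl
  | lt x y => exact hR.combLT_iff (h1 x) (h1 y)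
  | eq x y => exact hR.eq_iff (h1 x) (h1 y)
  | el x y => simp only [MSOE.sat, (h1 x).level_eq, (h1 y).level_eq]
  | mem x X => exact hR.mem_iff (h2 X) (h1 x)
  | not φ ih => exact (ih hR h1 h2).not
  | or φ ψ ihφ ihψ => exact or_congr (ihφ hR h1 h2) (ihψ hR h1 h2)
  | exFO x φ ih =>
    have key : ∀ {R'} {s t}, IsFinPartialBij R' → R ≤ R' → NodeRel R' s t →
        (MSOE.sat (combTree AP I) (combTree AP I).pathSets (Function.update v1 x s) v2 φ ↔
          MSOE.sat (combTree AP J) (combTree AP J).pathSets (Function.update w1 x t) w2 φ) :=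
      fun hR' hle hst => ih hR' (Function.forall_update_rel (fun y => (h1 y).mono hle) hst x)
        fun X => (h2 X).mono hle
    constructor
    · rintro ⟨s, hs⟩
      obtain ⟨R', t, hR', hle, hst⟩ := hR.exists_nodeRel_right s
      exact ⟨t, (key hR' hle hst).1 hs⟩
    · rintro ⟨t, ht⟩
      obtain ⟨R', s, hR', hle, hst⟩ := hR.exists_nodeRel_left t
      exact ⟨s, (key hR' hle hst).2 ht⟩
  | exSO X φ ih =>
    have key : ∀ {R'} {i j}, IsFinPartialBij R' → R ≤ R' → R' i j →
        (MSOE.sat (combTree AP I) (combTree AP I).pathSets v1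
            (Function.update v2 X (Set.range (branch i))) φ ↔
          MSOE.sat (combTree AP J) (combTree AP J).pathSets w1
            (Function.update w2 X (Set.range (branch j))) φ) :=
      fun hR' hle hij => ih hR' (fun y => (h1 y).mono hle)
        (Function.forall_update_rel (fun Y => (h2 Y).mono hle) (.inr ⟨_, _, hij, rfl, rfl⟩) X)
    simp only [MSOE.sat, mem_pathSets_iff]
    constructor
    · rintro ⟨_, ⟨i, rfl⟩, hs⟩
      obtain ⟨R', j, hR', hle, hij⟩ := hR.exists_extend_right i
      exact ⟨_, ⟨j, rfl⟩, (key hR' hle hij).1 hs⟩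
    · rintro ⟨_, ⟨j, rfl⟩, ht⟩
      obtain ⟨R', i, hR', hle, hij⟩ := hR.exists_extend_left j
      exact ⟨_, ⟨i, rfl⟩, (key hR' hle hij).2 ht⟩

theorem modelsMPL_combTree_iff [Infinite I] [Infinite J] (φ : MSOE AP) :
    MSOE.modelsMPL (combTree AP I) φ ↔ MSOE.modelsMPL (combTree AP J) φ :=
  sat_combTree_iff φ IsFinPartialBij.bot (fun _ => trivial) fun _ => .inl ⟨rfl, rfl⟩

end CombTree

namespace HQCTL

variable {AP : Type} {T : LTree AP} {Q : ℕ → Set T.node} {V : ℕ → ℕ → T.node} {ε : ℕ → T.node}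

def everyPathMeetsLater (q : ℕ) : HQCTL AP := .not (.ex 0 (.not (.next (eventually (.qatom q 0)))))

theorem sat_everyPathMeetsLater (hε : ε 0 = T.root) {q : ℕ} :
    sat T Q V ε 0 (everyPathMeetsLater q) ↔ ∀ p, T.InitPath p → ∃ j, 1 ≤ j ∧ p j ∈ Q q := by
  simp [everyPathMeetsLater, sat_ex_zero hε]

def levelTransversal : HQCTL AP := .exPr 1 (conj (everyPathMeetsLater 1) (levelInjective 1))

theorem models_levelTransversal_iff : models T levelTransversal ↔
    ∃ A : Set T.node, (∀ p, T.InitPath p → ∃ j, 1 ≤ j ∧ p j ∈ A) ∧ A.InjOn T.level :=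
  models_iff_of_forall_initPath fun _ hp => by
    simp [levelTransversal, sat_exPr, sat_everyPathMeetsLater hp.2, sat_levelInjective hp.2]

end HQCTL

namespace CombTree

variable {AP I : Type}

theorem models_levelTransversal [Nonempty I] [Countable I] :
    HQCTL.models (combTree AP I) HQCTL.levelTransversal := by
  obtain ⟨e, he⟩ := Countable.exists_injective_nat I
  refine HQCTL.models_levelTransversal_iff.2 ⟨Set.range fun i => some (i, e i), ?_, ?_⟩
  · intro p hp
    obtain ⟨i, rfl⟩ := eq_branch_of_initPath hp
    exact ⟨e i + 1, by omega, i, rfl⟩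
  · rintro _ ⟨i, rfl⟩ _ ⟨i', rfl⟩ h
    rw [level_some, level_some, Nat.succ_inj] at h
    rw [he h]

theorem not_models_levelTransversal [Uncountable I] :
    ¬ HQCTL.models (combTree AP I) HQCTL.levelTransversal := by
  rw [HQCTL.models_levelTransversal_iff]
  rintro ⟨A, hmeet, hinj⟩
  choose f hf1 hf2 using fun i => hmeet (branch i) (branch_initPath i)
  have hf : Function.Injective f := fun i i' h => by
    have hnode := hinj (hf2 i) (hf2 i')
      (by rw [(branch_initPath i).level_apply, (branch_initPath i').level_apply, h])
    rw [h] at hnode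
    exact branch_injective_of_ne_zero (by have := hf1 i'; omega) hnode
  exact not_countable hf.countable

end CombTree

theorem hyperQCTLStar_strictly_more_expressive_than_mplE_general (AP : Type) :
    (∀ φ : MSOE AP, φ.closed → ∃ ψ : HQCTL AP,
        ∀ T : LTree AP, MSOE.modelsMPL T φ ↔ HQCTL.models T ψ) ∧
    (∃ ψ : HQCTL AP,
        ¬ ∃ φ : MSOE AP, φ.closed ∧
          ∀ T : LTree AP, MSOE.modelsMPL T φ ↔ HQCTL.models T ψ) := by
  refine ⟨fun φ hφ => ⟨HQCTL.ofMPL φ, HQCTL.models_ofMPL_iff hφ⟩, HQCTL.levelTransversal, ?_⟩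
  rintro ⟨φ, -, hφ⟩
  have hℕ := (hφ (combTree AP ℕ)).2 CombTree.models_levelTransversal
  have hℝ := mt (hφ (combTree AP ℝ)).1 CombTree.not_models_levelTransversal
  exact hℝ ((CombTree.modelsMPL_combTree_iff φ).1 hℕ)

/-- HyperQCTL* is strictly more expressive than MPL[E]. -/
theorem hyperQCTLStar_strictly_more_expressive_than_mplE (AP : Type)
    [Fintype AP] [Nonempty AP] :
    (∀ φ : MSOE AP, φ.closed → ∃ ψ : HQCTL AP,
        ∀ T : LTree AP, MSOE.modelsMPL T φ ↔ HQCTL.models T ψ) ∧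
    (∃ ψ : HQCTL AP,
        ¬ ∃ φ : MSOE AP, φ.closed ∧
          ∀ T : LTree AP, MSOE.modelsMPL T φ ↔ HQCTL.models T ψ) :=
  hyperQCTLStar_strictly_more_expressive_than_mplE_general AP
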